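/- Let s and t be complex numbers with Re(s) > 1 and Re(t) > 1. Then the double series ∑_{n=1}^∞ ∑_{m=1}^∞ C_n^m / (n^t · m^s) converges and equals ζ(s) · ζ(s + t − 1) / ζ(t), where C_n^m is the Ramanujan sum and ζ is the Riemann zeta function. -/

import Mathlib

/-!
Möbius inversion of `∑_{d ∣ n} C_d^m = n · [n ∣ m]` gives
`C_n^m = ∑_{d ∣ gcd(n,m)} μ(n/d) d`. Writing `n = k d` and `m = d j`, the double series
becomes the product of three absolutely convergent Dirichlet series,
`∑ μ(k) k^{-t} · ∑ d^{1-s-t} · ∑ j^{-s} = ζ(s+t-1) ζ(s) / ζ(t)`, and absolute convergence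
justifies regrouping the triple series along the fibres of `(k, d, j) ↦ (k d, d j)`.
-/

/-- The Ramanujan sum `C n m`: the sum of the `m`-th powers of the primitive
`n`-th roots of unity in `ℂ`. -/
noncomputable def ramanujanSum (n m : ℕ) : ℂ :=
  ∑ ξ ∈ primitiveRoots n ℂ, ξ ^ m

open Finset Polynomial LSeries
open scoped ArithmeticFunction.Moebius LSeries.notation

theorem IsPrimitiveRoot.sum_nthRootsFinset_pow {R : Type*} [CommRing R] [IsDomain R] {ζ : R}
    {n : ℕ} (hζ : IsPrimitiveRoot ζ n) (m : ℕ) :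
    ∑ ξ ∈ nthRootsFinset n (1 : R), ξ ^ m = if n ∣ m then (n : R) else 0 := by
  classical
  rcases n.eq_zero_or_pos with rfl | hn
  · simp
  have : NeZero n := ⟨hn.ne'⟩
  have hroots : nthRootsFinset n (1 : R) = (range n).image (ζ ^ ·) := by
    ext ξ
    simp only [Polynomial.mem_nthRootsFinset hn, mem_image, mem_range]
    refine ⟨hζ.eq_pow_of_pow_eq_one, ?_⟩
    rintro ⟨i, -, rfl⟩
    rw [← pow_mul, mul_comm, pow_mul, hζ.pow_eq_one, one_pow]
  rw [hroots, sum_image fun i hi j hj h => hζ.pow_inj (mem_range.1 hi) (mem_range.1 hj) h]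
  simp_rw [← pow_mul, mul_comm _ m, pow_mul]
  split_ifs with h
  · simp [(hζ.pow_eq_one_iff_dvd m).2 h]
  · have hζm : ζ ^ m - 1 ≠ 0 := sub_ne_zero.2 (mt (hζ.pow_eq_one_iff_dvd m).1 h)
    refine (mul_eq_zero.1 ?_).resolve_right hζm
    rw [geom_sum_mul, ← pow_mul, mul_comm, pow_mul, hζ.pow_eq_one, one_pow, sub_self]

theorem sum_divisors_ramanujanSum (m : ℕ) : ∀ n > 0,
    ∑ d ∈ n.divisors, ramanujanSum d m = if n ∣ m then (n : ℂ) else 0 := by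
  intro n hn
  rw [← (Complex.isPrimitiveRoot_exp n hn.ne').sum_nthRootsFinset_pow,
    IsPrimitiveRoot.nthRoots_one_eq_biUnion_primitiveRoots,
    sum_biUnion fun i _ j _ hij => IsPrimitiveRoot.disjoint hij]
  rfl

theorem ramanujanSum_eq_sum_divisors_gcd {n : ℕ} (m : ℕ) (hn : n ≠ 0) :
    ramanujanSum n m = ∑ d ∈ (n.gcd m).divisors, (μ (n / d) : ℂ) * d := by
  have hinv := ArithmeticFunction.sum_eq_iff_sum_mul_moebius_eq.1
    (sum_divisors_ramanujanSum m) n (Nat.pos_of_ne_zero hn)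
  have hdiv : (n.gcd m).divisors = n.divisors.filter (· ∣ m) := by
    ext d
    simp [Nat.dvd_gcd_iff, hn]
  rw [← hinv, Nat.sum_divisorsAntidiagonal'
    (f := fun a b => (μ a : ℂ) * if b ∣ m then (b : ℂ) else 0), hdiv, sum_filter]
  refine sum_congr rfl fun d _ => ?_
  split_ifs <;> simp

theorem HasSum.mul_of_finiteDimensional {ι κ R : Type*} [NormedRing R] [NormedSpace ℝ R]
    [FiniteDimensional ℝ R] {f : ι → R} {g : κ → R} {a b : R} (hf : HasSum f a)
    (hg : HasSum g b) : HasSum (fun x : ι × κ => f x.1 * g x.2) (a * b) :=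
  hf.mul hg <| summable_mul_of_summable_norm' (summable_norm_iff.2 hf.summable) hf.summable
    (summable_norm_iff.2 hg.summable) hg.summable

theorem HasSum.sum_divisors_gcd {M : Type*} [AddCommGroup M] [TopologicalSpace M]
    [IsTopologicalAddGroup M] [RegularSpace M] {φ : ℕ × ℕ × ℕ → M} {a : M} (hφ : HasSum φ a)
    (h_zero_mid : ∀ k j, φ (k, 0, j) = 0) (h_zero_ends : ∀ d, φ (0, d, 0) = 0) :
    HasSum (fun p : ℕ × ℕ => ∑ d ∈ (p.1.gcd p.2).divisors, φ (p.1 / d, d, p.2 / d)) a := by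
  classical
  -- Regroup `φ` along `(k, d, j) ↦ ((k d, d j), d)`, which is injective off `d = 0`; the terms
  -- `φ (0, d, 0)` land over `(0, 0)`, where `(gcd 0 0).divisors = ∅`.
  let G : (ℕ × ℕ) × ℕ → M := fun x =>
    if x.2 ∈ (x.1.1.gcd x.1.2).divisors then φ (x.1.1 / x.2, x.2, x.1.2 / x.2) else 0
  have hG_supp : ∀ x ∈ Function.support G, x.2 ∈ (x.1.1.gcd x.1.2).divisors := fun x hx => by
    by_contra h
    exact hx (if_neg h)
  have hG_sum : HasSum G a := by
    refine (hasSum_iff_hasSum_of_ne_zero_bij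
      (fun x => (x.1.1.1 / x.1.2, x.1.2, x.1.1.2 / x.1.2)) ?_ ?_ ?_).1 hφ
    · rintro ⟨⟨⟨n, m⟩, d⟩, hx⟩ ⟨⟨⟨n', m'⟩, d'⟩, hx'⟩ h
      obtain ⟨hdn, hdm⟩ := Nat.dvd_gcd_iff.1 (Nat.dvd_of_mem_divisors (hG_supp _ hx))
      obtain ⟨hdn', hdm'⟩ := Nat.dvd_gcd_iff.1 (Nat.dvd_of_mem_divisors (hG_supp _ hx'))
      simp only [Prod.mk.injEq] at h
      obtain ⟨hn, rfl, hm⟩ := h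
      dsimp only at hdn hdm hdn' hdm'
      obtain rfl : n = n' := by rw [← Nat.div_mul_cancel hdn, hn, Nat.div_mul_cancel hdn']
      obtain rfl : m = m' := by rw [← Nat.div_mul_cancel hdm, hm, Nat.div_mul_cancel hdm']
      rfl
    · rintro ⟨k, d, j⟩ hx
      have hd : d ≠ 0 := by
        rintro rfl
        exact hx (h_zero_mid k j)
      have hkj : ¬(k = 0 ∧ j = 0) := by
        rintro ⟨rfl, rfl⟩
        exact hx (h_zero_ends d)
      have hmem : d ∈ ((k * d).gcd (d * j)).divisors :=
        Nat.mem_divisors.2 ⟨Nat.dvd_gcd (dvd_mul_left d k) (dvd_mul_right d j), by simp_all⟩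
      have hval : G ((k * d, d * j), d) = φ (k, d, j) := by
        simp only [G, if_pos hmem, Nat.mul_div_cancel k hd.bot_lt,
          Nat.mul_div_cancel_left j hd.bot_lt]
      refine ⟨⟨((k * d, d * j), d), by rwa [Function.mem_support, hval]⟩, ?_⟩
      simp [Nat.mul_div_cancel k hd.bot_lt, Nat.mul_div_cancel_left j hd.bot_lt]
    · rintro ⟨x, hx⟩
      exact (if_pos (hG_supp x hx)).symm
  refine hG_sum.prod_fiberwise fun p => ?_
  have h : HasSum (fun d => G (p, d)) (∑ d ∈ (p.1.gcd p.2).divisors, G (p, d)) :=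
    hasSum_sum_of_ne_finset_zero fun d hd => if_neg hd
  rwa [sum_congr rfl fun d hd => if_pos hd] at h

theorem LSeriesHasSum_moebius {s : ℂ} (hs : 1 < s.re) :
    LSeriesHasSum ↗μ s (riemannZeta s)⁻¹ := by
  have h := LSeries_one_mul_Lseries_moebius hs
  rw [LSeries_one_eq_riemannZeta hs] at h
  exact eq_inv_of_mul_eq_one_right h ▸
    (ArithmeticFunction.LSeriesSummable_moebius_iff.2 hs).LSeriesHasSum

theorem term_mul_term_one_mul_term_one (f : ℕ → ℂ) (s t : ℂ) {k d j : ℕ} (hk : k ≠ 0)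
    (hd : d ≠ 0) (hj : j ≠ 0) :
    term f t k * (term 1 (s + t - 1) d * term 1 s j) =
      f k * d / (((k * d : ℕ) : ℂ) ^ t * ((d * j : ℕ) : ℂ) ^ s) := by
  have hd' : (d : ℂ) ≠ 0 := Nat.cast_ne_zero.2 hd
  rw [term_of_ne_zero hk, term_of_ne_zero hd, term_of_ne_zero hj, Nat.cast_mul, Nat.cast_mul,
    Complex.natCast_mul_natCast_cpow, Complex.natCast_mul_natCast_cpow, Complex.cpow_sub _ _ hd',
    Complex.cpow_add _ _ hd', Complex.cpow_one, Pi.one_apply, Pi.one_apply, one_div_div]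
  ring

theorem sum_divisors_gcd_term_eq_ramanujanSum_div (s t : ℂ) (n m : ℕ) :
    ∑ d ∈ (n.gcd m).divisors, term ↗μ t (n / d) * (term 1 (s + t - 1) d * term 1 s (m / d)) =
      if n = 0 ∨ m = 0 then 0 else ramanujanSum n m / ((n : ℂ) ^ t * (m : ℂ) ^ s) := by
  split_ifs with h
  · rcases h with rfl | rfl <;> simp [term_zero]
  · obtain ⟨hn, hm⟩ := not_or.1 h
    rw [ramanujanSum_eq_sum_divisors_gcd m hn, sum_div]
    refine sum_congr rfl fun d hd => ?_
    obtain ⟨hdn, hdm⟩ := Nat.dvd_gcd_iff.1 (Nat.dvd_of_mem_divisors hd)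
    have hd0 : d ≠ 0 := (Nat.pos_of_mem_divisors hd).ne'
    rw [term_mul_term_one_mul_term_one _ _ _ ((Nat.div_ne_zero_iff_of_dvd hdn).2 ⟨hn, hd0⟩) hd0
      ((Nat.div_ne_zero_iff_of_dvd hdm).2 ⟨hm, hd0⟩), Nat.div_mul_cancel hdn,
      Nat.mul_div_cancel' hdm]

/-- For `Re s > 1` and `Re t > 1`, the double Dirichlet series of Ramanujan
sums converges and
`∑_{n,m ≥ 1} C_n^m / (n^t · m^s) = ζ(s) · ζ(s+t-1) / ζ(t)`. -/
theorem tsum_tsum_ramanujanSum (s t : ℂ) (hs : 1 < s.re) (ht : 1 < t.re) :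
    Summable (fun q : ℕ × ℕ =>
      if q.1 = 0 ∨ q.2 = 0 then (0 : ℂ)
      else ramanujanSum q.1 q.2 / ((q.1 : ℂ) ^ t * (q.2 : ℂ) ^ s)) ∧
    ∑' q : ℕ × ℕ, (if q.1 = 0 ∨ q.2 = 0 then (0 : ℂ)
      else ramanujanSum q.1 q.2 / ((q.1 : ℂ) ^ t * (q.2 : ℂ) ^ s)) =
      riemannZeta s * riemannZeta (s + t - 1) / riemannZeta t := by
  have hst : 1 < (s + t - 1).re := by
    simp only [Complex.sub_re, Complex.add_re, Complex.one_re]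
    linarith
  have h := ((LSeriesHasSum_moebius ht).mul_of_finiteDimensional
    ((LSeriesHasSum_one hst).mul_of_finiteDimensional (LSeriesHasSum_one hs))).sum_divisors_gcd
    (fun k j => by simp) (fun d => by simp)
  simp only [sum_divisors_gcd_term_eq_ramanujanSum_div] at h
  refine ⟨h.summable, h.tsum_eq.trans ?_⟩
  ring
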